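/- arXiv:2209.14622 — 2 statements merged into one kernel-verified Lean document; each statement's English description precedes it below -/
import Mathlib

section
/- Let φ : [0,∞) × ℝ^d → ℝ be the unique viscosity solution of the Hamilton–Jacobi equation ∂_t φ + |∇φ|²/2 = 0 with globally Lipschitz initial datum φ(0,·), equivalently given by the Hopf–Lax formula φ(t,x) = inf_y |x−y|²/(2t) + φ(0,y) for t > 0. Set u := φ(0,·) + |·|²/2, let μ₀ ∈ 𝓟₂(ℝ^d) be absolutely continuous, and define ω(t) = [∇ co((1−t)|·|²/2 + t u)]_# μ₀, where co denotes the convex hull. Then for all t ≥ 0, ω(t) is a minimizer of the problem min over μ ∈ 𝓟₂(ℝ^d) of W₂²(μ₀, μ)/(2t) − ∫ φ(t,·) dμ. -/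
/-!
Let `v` be the convex envelope of `F = ‖·‖²/2 + t φ(0, ·)` and `T = ∇v`. By the Hopf–Lax formula,
for every `y` the affine function `x ↦ ⟪y, x⟫ + t φ(t, y) - ‖y‖²/2` lies below `F`, hence below
`v`; equivalently `f(x) + g(y) ≤ ‖x - y‖²` with `f = ‖·‖² - 2v` and `g = 2t φ(t, ·)`. Where `v`
is differentiable, which is `μ₀`-a.e. because `v` is convex and `μ₀ ≪ Lebesgue`, the subgradient
inequality and `v ≤ F` give the reverse inequality at `y = T x`. Integrating the first inequality
against any coupling of `μ₀` and `μ`, and the second against `(id, T)_# μ₀`, shows that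
`W₂²(μ₀, ·) - ∫ g` takes at `T_# μ₀` a value at most `∫ f dμ₀`, and at `μ` a value at least
`∫ f dμ₀`.
-/

open MeasureTheory Set
open scoped ENNReal RealInnerProductSpace

noncomputable section

abbrev Rd (d : ℕ) : Type := EuclideanSpace ℝ (Fin d)

/-- A coupling between two measures on `Rd d`. -/
def IsCoupling {d : ℕ} (γ : Measure (Rd d × Rd d)) (μ ν : Measure (Rd d)) : Prop :=
  γ.map Prod.fst = μ ∧ γ.map Prod.snd = ν

/-- Quadratic transport cost of a plan. -/
def transportCost {d : ℕ} (γ : Measure (Rd d × Rd d)) : ℝ≥0∞ :=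
  ∫⁻ p, ENNReal.ofReal (‖p.1 - p.2‖ ^ 2) ∂γ

/-- Squared 2-Wasserstein distance (extended-real valued). -/
def W2sqE {d : ℕ} (μ ν : Measure (Rd d)) : ℝ≥0∞ :=
  ⨅ (γ : Measure (Rd d × Rd d)) (_ : IsCoupling γ μ ν), transportCost γ

/-- Squared 2-Wasserstein distance. -/
def W2sq {d : ℕ} (μ ν : Measure (Rd d)) : ℝ := (W2sqE μ ν).toReal

/-- 2-Wasserstein distance. -/
def W2 {d : ℕ} (μ ν : Measure (Rd d)) : ℝ := Real.sqrt (W2sq μ ν)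

/-- Optimal transport plan. -/
def IsOptimalPlan {d : ℕ} (γ : Measure (Rd d × Rd d)) (μ ν : Measure (Rd d)) : Prop :=
  IsCoupling γ μ ν ∧ transportCost γ = W2sqE μ ν

/-- Probability measures with finite second moment: `𝓟₂(ℝ^d)`. -/
def MemP2 {d : ℕ} (μ : Measure (Rd d)) : Prop :=
  IsProbabilityMeasure μ ∧ (∫⁻ x, ENNReal.ofReal (‖x‖ ^ 2) ∂μ) < ⊤

/-- Probability measures supported on `Ω`: `𝓟(Ω)`. -/
def ProbOn {d : ℕ} (Ω : Set (Rd d)) (μ : Measure (Rd d)) : Prop :=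
  IsProbabilityMeasure μ ∧ μ Ωᶜ = 0

/-- θ-dissipative extrapolation operator. -/
def Dissipative {d : ℕ} (θ : ℝ)
    (E : Measure (Rd d) → Measure (Rd d) → Measure (Rd d)) : Prop :=
  ∀ μ₀ μ₁ : Measure (Rd d), MemP2 μ₀ → MemP2 μ₁ → W2 μ₁ (E μ₀ μ₁) ≤ θ * W2 μ₀ μ₁

/-- Sup norm of the Hessian of a test function. -/
def HessNorm {d : ℕ} (φ : Rd d → ℝ) : ℝ := ⨆ x, ‖iteratedFDeriv ℝ 2 φ x‖

/-- No-flux boundary condition `∇φ · n_∂Ω = 0` on `∂Ω`, expressed via the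
normal cone of the convex set `Ω`. -/
def NormalBC {d : ℕ} (Ω : Set (Rd d)) (φ : Rd d → ℝ) : Prop :=
  ∀ x ∈ frontier Ω, ∀ v : Rd d, (∀ y ∈ Ω, ⟪v, y - x⟫ ≤ 0) → ⟪gradient φ x, v⟫ = 0

/-- Laplacian as the trace of the second derivative. -/
def lap {d : ℕ} (φ : Rd d → ℝ) (x : Rd d) : ℝ :=
  ∑ i : Fin d, iteratedFDeriv ℝ 2 φ x ![EuclideanSpace.single i 1, EuclideanSpace.single i 1]

/-- Absolutely continuous curve in the Wasserstein space on `[0,T]`. -/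
def ACCurve {d : ℕ} (T : ℝ) (ϱ : ℝ → Measure (Rd d)) : Prop :=
  ∃ m : ℝ → ℝ, IntegrableOn m (Icc 0 T) ∧
    ∀ r s : ℝ, 0 ≤ r → r ≤ s → s ≤ T → W2 (ϱ r) (ϱ s) ≤ ∫ t in r..s, m t

/-- Convex envelope (convex hull) of a function: the pointwise supremum of all convex
minorants. -/
def convEnv {d : ℕ} (f : Rd d → ℝ) : Rd d → ℝ :=
  fun x => sSup {r : ℝ | ∃ g : Rd d → ℝ, ConvexOn ℝ univ g ∧ (∀ z, g z ≤ f z) ∧ r = g x}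

theorem LocallyLipschitz.ae_differentiableAt {E F : Type*} [NormedAddCommGroup E]
    [NormedSpace ℝ E] [NormedAddCommGroup F] [NormedSpace ℝ F] [FiniteDimensional ℝ E]
    [FiniteDimensional ℝ F] [MeasurableSpace E] [BorelSpace E] {μ : Measure E}
    [μ.IsAddHaarMeasure] {f : E → F} (hf : LocallyLipschitz f) :
    ∀ᵐ x ∂μ, DifferentiableAt ℝ f x := by
  choose K U hU hfU using hf
  obtain ⟨s, hs, hcover⟩ :=
    TopologicalSpace.countable_cover_nhds fun x => interior_mem_nhds.2 (hU x)
  have hloc : ∀ y ∈ s, ∀ᵐ x ∂μ, x ∈ interior (U y) → DifferentiableAt ℝ f x := fun y _ => by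
    filter_upwards [((hfU y).mono interior_subset).ae_differentiableWithinAt_of_mem]
      with x hx hxU
    exact (hx hxU).differentiableAt (isOpen_interior.mem_nhds hxU)
  filter_upwards [(ae_ball_iff hs).2 hloc] with x hx
  obtain ⟨y, hy, hxy⟩ := mem_iUnion₂.1 (hcover ▸ mem_univ x)
  exact hx y hy hxy

theorem ConvexOn.ae_differentiableAt {E : Type*} [NormedAddCommGroup E] [NormedSpace ℝ E]
    [FiniteDimensional ℝ E] [MeasurableSpace E] [BorelSpace E]
    {μ : Measure E} [μ.IsAddHaarMeasure] {v : E → ℝ} (hv : ConvexOn ℝ univ v) :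
    ∀ᵐ x ∂μ, DifferentiableAt ℝ v x :=
  hv.locallyLipschitz.ae_differentiableAt

section ConvexAnalysis

variable {E : Type*} [NormedAddCommGroup E] [InnerProductSpace ℝ E]

theorem ConvexOn.add_inner_gradient_le [CompleteSpace E] {v : E → ℝ} (hv : ConvexOn ℝ univ v)
    {x : E} (hd : DifferentiableAt ℝ v x) (z : E) : v x + ⟪gradient v x, z - x⟫ ≤ v z := by
  have hline : ConvexOn ℝ univ (v ∘ AffineMap.lineMap (k := ℝ) x z) := by
    simpa using hv.comp_affineMap (AffineMap.lineMap x z)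
  have hderiv : HasDerivAt (v ∘ AffineMap.lineMap (k := ℝ) x z) ⟪gradient v x, z - x⟫ 0 := by
    have hd' : HasFDerivAt v (fderiv ℝ v x) (AffineMap.lineMap x z (0 : ℝ)) := by
      simpa using hd.hasFDerivAt
    simpa [gradient, InnerProductSpace.toDual_symm_apply] using
      hd'.comp_hasDerivAt (0 : ℝ) AffineMap.hasDerivAt_lineMap
  have := hline.le_slope_of_hasDerivAt (mem_univ 0) (mem_univ 1) zero_lt_one hderiv
  simp only [slope_def_field, Function.comp_apply, AffineMap.lineMap_apply_one,
    AffineMap.lineMap_apply_zero, sub_zero, div_one] at this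
  linarith

/-- Test the subgradient inequality at distance `‖x‖ + 1` from `x` in the direction of the
gradient. -/
theorem ConvexOn.norm_gradient_le [CompleteSpace E] {v : E → ℝ} (hv : ConvexOn ℝ univ v)
    {b c : ℝ} (hlow : ∀ x, c ≤ v x) (hup : ∀ x, v x ≤ ‖x‖ ^ 2 + b) (x : E) :
    ‖gradient v x‖ ≤ 4 * ‖x‖ + (4 + (b - c)) := by
  have hbc : 0 ≤ b - c := by
    have := (hlow 0).trans (hup 0)
    rw [norm_zero] at this
    linarith
  by_cases hd : DifferentiableAt ℝ v x
  swap
  · simp only [gradient, fderiv_zero_of_not_differentiableAt hd, map_zero, norm_zero]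
    positivity
  set p := gradient v x
  set s := ‖x‖ + 1
  have hs : 1 ≤ s := by simp [s]
  have hu : ‖‖p‖⁻¹ • p‖ ≤ 1 := by
    rcases eq_or_ne p 0 with h | h
    · simp [h]
    · rw [norm_smul, norm_inv, norm_norm, inv_mul_cancel₀ (norm_ne_zero_iff.2 h)]
  have hpu : ⟪p, s • (‖p‖⁻¹ • p)⟫ = s * ‖p‖ := by
    rcases eq_or_ne p 0 with h | h
    · simp [h]
    · rw [real_inner_smul_right, real_inner_smul_right, real_inner_self_eq_norm_sq]
      field_simp
  have hz : ‖x + s • (‖p‖⁻¹ • p)‖ ≤ 2 * s := by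
    calc ‖x + s • (‖p‖⁻¹ • p)‖ ≤ ‖x‖ + s * ‖‖p‖⁻¹ • p‖ := by
          grw [norm_add_le, norm_smul, Real.norm_of_nonneg (by linarith)]
      _ ≤ 2 * s := by nlinarith
  have hsub := hv.add_inner_gradient_le hd (x + s • (‖p‖⁻¹ • p))
  rw [add_sub_cancel_left, hpu] at hsub
  have hsp : s * ‖p‖ ≤ s * (4 * s + (b - c)) := by
    nlinarith [hup (x + s • (‖p‖⁻¹ • p)), hlow x, pow_le_pow_left₀ (norm_nonneg _) hz 2]
  nlinarith [le_of_mul_le_mul_left hsp (by linarith)]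

theorem measurable_gradient [CompleteSpace E] [MeasurableSpace E] [BorelSpace E] (v : E → ℝ) :
    Measurable (gradient v) :=
  (InnerProductSpace.toDual ℝ E).symm.continuous.measurable.comp (measurable_fderiv ℝ v)

end ConvexAnalysis

section ConvexEnvelope

variable {d : ℕ} {f g : Rd d → ℝ}

theorem bddAbove_convEnv_set (f : Rd d → ℝ) (x : Rd d) :
    BddAbove {r : ℝ | ∃ g : Rd d → ℝ, ConvexOn ℝ univ g ∧ (∀ z, g z ≤ f z) ∧ r = g x} := by
  refine ⟨f x, ?_⟩
  rintro r ⟨g, _, hgf, rfl⟩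
  exact hgf x

theorem le_convEnv (hg : ConvexOn ℝ univ g) (hgf : ∀ z, g z ≤ f z) (x : Rd d) :
    g x ≤ convEnv f x :=
  le_csSup (bddAbove_convEnv_set f x) ⟨g, hg, hgf, rfl⟩

theorem convEnv_le_of_forall_le {c r : ℝ} (hc : ∀ z, c ≤ f z) {x : Rd d}
    (h : ∀ g : Rd d → ℝ, ConvexOn ℝ univ g → (∀ z, g z ≤ f z) → g x ≤ r) : convEnv f x ≤ r := by
  refine csSup_le ⟨c, fun _ => c, convexOn_const c convex_univ, hc, rfl⟩ ?_
  rintro r ⟨g, hg, hgf, rfl⟩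
  exact h g hg hgf

theorem convEnv_le {c : ℝ} (hc : ∀ z, c ≤ f z) (x : Rd d) : convEnv f x ≤ f x :=
  convEnv_le_of_forall_le hc fun _ _ hgf => hgf x

theorem convexOn_convEnv {c : ℝ} (hc : ∀ z, c ≤ f z) : ConvexOn ℝ univ (convEnv f) := by
  refine ⟨convex_univ, fun x _ y _ a b ha hb hab => convEnv_le_of_forall_le hc fun g hg hgf => ?_⟩
  calc g (a • x + b • y) ≤ a * g x + b * g y := hg.2 (mem_univ x) (mem_univ y) ha hb hab
    _ ≤ a * convEnv f x + b * convEnv f y := by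
      gcongr <;> exact le_convEnv hg hgf _

end ConvexEnvelope

section HopfLax

variable {E : Type*} [NormedAddCommGroup E] {t : ℝ} {K : NNReal} {ψ : E → ℝ}

def hopfLax (t : ℝ) (ψ : E → ℝ) (x : E) : ℝ :=
  ⨅ y, ‖x - y‖ ^ 2 / (2 * t) + ψ y

theorem sub_sq_div_le_hopfLax_summand (ht : 0 < t) (hψ : LipschitzWith K ψ) (x y : E) :
    ψ x - K ^ 2 * t / 2 ≤ ‖x - y‖ ^ 2 / (2 * t) + ψ y := by
  have hxy : ψ x ≤ ψ y + K * ‖x - y‖ := by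
    simpa [dist_eq_norm] using hψ.le_add_mul x y
  have hsq : K * ‖x - y‖ - K ^ 2 * t / 2 ≤ ‖x - y‖ ^ 2 / (2 * t) := by
    rw [le_div_iff₀ (by positivity)]
    nlinarith [sq_nonneg (‖x - y‖ - K * t)]
  linarith

theorem hopfLax_le (ht : 0 < t) (hψ : LipschitzWith K ψ) (x y : E) :
    hopfLax t ψ x ≤ ‖x - y‖ ^ 2 / (2 * t) + ψ y :=
  ciInf_le ⟨ψ x - K ^ 2 * t / 2, by
    rintro _ ⟨z, rfl⟩
    exact sub_sq_div_le_hopfLax_summand ht hψ x z⟩ y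

theorem le_hopfLax {x : E} {b : ℝ} (h : ∀ y, b ≤ ‖x - y‖ ^ 2 / (2 * t) + ψ y) :
    b ≤ hopfLax t ψ x :=
  have : Nonempty E := ⟨x⟩
  le_ciInf h

theorem lipschitzWith_hopfLax (ht : 0 < t) (hψ : LipschitzWith K ψ) :
    LipschitzWith K (hopfLax t ψ) := by
  refine LipschitzWith.of_le_add_mul K fun x x' => ?_
  suffices hopfLax t ψ x - K * dist x x' ≤ hopfLax t ψ x' by linarith
  refine le_hopfLax fun y => ?_
  have hshift := hopfLax_le ht hψ x (y + (x - x'))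
  have hψy : ψ (y + (x - x')) ≤ ψ y + K * dist x x' := by
    simpa [dist_eq_norm] using hψ.le_add_mul (y + (x - x')) y
  rw [show x - (y + (x - x')) = x' - y by abel] at hshift
  linarith

end HopfLax

theorem ofReal_integral_le_lintegral_ofReal {α : Type*} [MeasurableSpace α] {μ : Measure α}
    {h : α → ℝ} (hh : Integrable h μ) :
    ENNReal.ofReal (∫ x, h x ∂μ) ≤ ∫⁻ x, ENNReal.ofReal (h x) ∂μ :=
  calc ENNReal.ofReal (∫ x, h x ∂μ) ≤ ENNReal.ofReal (∫ x, max (h x) 0 ∂μ) :=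
        ENNReal.ofReal_le_ofReal (integral_mono hh hh.pos_part fun x => le_max_left _ _)
    _ = ∫⁻ x, ENNReal.ofReal (max (h x) 0) ∂μ :=
        ofReal_integral_eq_lintegral_ofReal hh.pos_part (.of_forall fun x => le_max_right _ _)
    _ = ∫⁻ x, ENNReal.ofReal (h x) ∂μ := by simp [ENNReal.ofReal_max]

section Wasserstein

variable {d : ℕ} {μ₀ μ : Measure (Rd d)}

theorem MemP2.integrable_sq (h : MemP2 μ) : Integrable (fun x : Rd d => ‖x‖ ^ 2) μ := by
  refine ⟨(continuous_norm.pow 2).aestronglyMeasurable, ?_⟩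
  rw [hasFiniteIntegral_iff_ofReal (.of_forall fun x => by positivity)]
  exact h.2

theorem MemP2.integrable_norm (h : MemP2 μ) : Integrable (fun x : Rd d => ‖x‖) μ := by
  have := h.1
  refine (integrable_const 1).add h.integrable_sq |>.mono' continuous_norm.aestronglyMeasurable
    (.of_forall fun x => ?_)
  change ‖‖x‖‖ ≤ 1 + ‖x‖ ^ 2
  rw [norm_norm]
  nlinarith [sq_nonneg (‖x‖ - 1)]

theorem MemP2.integrable_lipschitzWith_comp (h : MemP2 μ) {L : NNReal} {g : Rd d → ℝ}
    (hg : LipschitzWith L g) {T : Rd d → Rd d} (hT : Measurable T) {a b : ℝ}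
    (hTle : ∀ x, ‖T x‖ ≤ a * ‖x‖ + b) : Integrable (fun x => g (T x)) μ := by
  have := h.1
  refine (integrable_const (|g 0| + L * b)).add (h.integrable_norm.const_mul (L * a)) |>.mono'
    (hg.continuous.measurable.comp hT).aestronglyMeasurable (.of_forall fun x => ?_)
  have hgT : |g (T x) - g 0| ≤ L * ‖T x‖ := by
    simpa [Real.dist_eq] using hg.dist_le_mul (T x) 0
  have hL := mul_le_mul_of_nonneg_left (hTle x) L.coe_nonneg
  simp only [Real.norm_eq_abs, Pi.add_apply]
  linarith [abs_sub_abs_le_abs_sub (g (T x)) (g 0)]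

theorem MemP2.integrable_of_lipschitzWith (h : MemP2 μ) {L : NNReal} {g : Rd d → ℝ}
    (hg : LipschitzWith L g) : Integrable g μ :=
  h.integrable_lipschitzWith_comp hg measurable_id (a := 1) (b := 0) fun x => by simp

theorem isCoupling_prod [IsProbabilityMeasure μ₀] [IsProbabilityMeasure μ] :
    IsCoupling (μ₀.prod μ) μ₀ μ := by
  simp [IsCoupling]

theorem isCoupling_map_graph {T : Rd d → Rd d} (hT : Measurable T) :
    IsCoupling (μ₀.map fun x => (x, T x)) μ₀ (μ₀.map T) := by
  constructor <;> rw [Measure.map_map (by fun_prop) (by fun_prop)] <;> simp [Function.comp_def]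

theorem W2sqE_ne_top (h0 : MemP2 μ₀) (hμ : MemP2 μ) : W2sqE μ₀ μ ≠ ⊤ := by
  have := h0.1
  have := hμ.1
  have hle : W2sqE μ₀ μ ≤ transportCost (μ₀.prod μ) := iInf₂_le (μ₀.prod μ) isCoupling_prod
  refine ne_top_of_le_ne_top ?_ hle
  have hbound : Integrable (fun p : Rd d × Rd d => 2 * ‖p.1‖ ^ 2 + 2 * ‖p.2‖ ^ 2) (μ₀.prod μ) :=
    ((h0.integrable_sq.comp_fst μ).const_mul 2).add ((hμ.integrable_sq.comp_snd μ₀).const_mul 2)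
  have hcost : Integrable (fun p : Rd d × Rd d => ‖p.1 - p.2‖ ^ 2) (μ₀.prod μ) := by
    refine hbound.mono' (by fun_prop) (.of_forall fun p => ?_)
    rw [Real.norm_of_nonneg (by positivity)]
    nlinarith [norm_sub_le p.1 p.2, norm_nonneg p.1, norm_nonneg p.2,
      sq_nonneg (‖p.1‖ - ‖p.2‖), norm_nonneg (p.1 - p.2)]
  exact hcost.lintegral_lt_top.ne

theorem integral_add_integral_le_W2sq (h0 : MemP2 μ₀) (hμ : MemP2 μ) {f g : Rd d → ℝ}
    (hf : Integrable f μ₀) (hg : Integrable g μ) (hdom : ∀ x y, f x + g y ≤ ‖x - y‖ ^ 2) :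
    ∫ x, f x ∂μ₀ + ∫ y, g y ∂μ ≤ W2sq μ₀ μ := by
  refine (ENNReal.ofReal_le_iff_le_toReal (W2sqE_ne_top h0 hμ)).1 (le_iInf₂ fun γ hγ => ?_)
  rcases hγ with ⟨hfst, hsnd⟩
  have hf' : Integrable (fun p : Rd d × Rd d => f p.1) γ := by
    rw [← hfst] at hf
    exact hf.comp_measurable measurable_fst
  have hg' : Integrable (fun p : Rd d × Rd d => g p.2) γ := by
    rw [← hsnd] at hg
    exact hg.comp_measurable measurable_snd
  have hint : ∫ p, (f p.1 + g p.2) ∂γ = ∫ x, f x ∂μ₀ + ∫ y, g y ∂μ := by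
    rw [integral_add hf' hg', ← hfst, ← hsnd,
      integral_map measurable_fst.aemeasurable (hfst ▸ hf.aestronglyMeasurable),
      integral_map measurable_snd.aemeasurable (hsnd ▸ hg.aestronglyMeasurable)]
  rw [← hint]
  exact (ofReal_integral_le_lintegral_ofReal (hf'.add hg')).trans
    (lintegral_mono fun p => ENNReal.ofReal_le_ofReal (hdom p.1 p.2))

theorem W2sq_map_le {T : Rd d → Rd d} (hT : Measurable T) {g : Rd d → ℝ}
    (hg : Integrable g μ₀) (hTg : ∀ᵐ x ∂μ₀, ‖x - T x‖ ^ 2 ≤ g x) :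
    W2sq μ₀ (μ₀.map T) ≤ ∫ x, g x ∂μ₀ := by
  have hg0 : 0 ≤ᵐ[μ₀] g := hTg.mono fun x hx => (sq_nonneg _).trans hx
  refine ENNReal.toReal_le_of_le_ofReal (integral_nonneg_of_ae hg0) ?_
  have hle : W2sqE μ₀ (μ₀.map T) ≤ transportCost (μ₀.map fun x => (x, T x)) :=
    iInf₂_le (μ₀.map fun x => (x, T x)) (isCoupling_map_graph hT)
  refine hle.trans ?_
  rw [transportCost, lintegral_map (by fun_prop) (by fun_prop),
    ofReal_integral_eq_lintegral_ofReal hg hg0]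
  exact lintegral_mono_ae (hTg.mono fun x hx => ENNReal.ofReal_le_ofReal hx)

theorem W2sq_map_sub_integral_le (h0 : MemP2 μ₀) (hμ : MemP2 μ) {T : Rd d → Rd d}
    (hT : Measurable T) {f g : Rd d → ℝ} (hf : Integrable f μ₀) (hgc : Continuous g)
    (hgμ : Integrable g μ) (hgT : Integrable (fun x => g (T x)) μ₀)
    (hdom : ∀ x y, f x + g y ≤ ‖x - y‖ ^ 2) (hTopt : ∀ᵐ x ∂μ₀, ‖x - T x‖ ^ 2 ≤ f x + g (T x)) :
    W2sq μ₀ (μ₀.map T) - ∫ y, g y ∂(μ₀.map T) ≤ W2sq μ₀ μ - ∫ y, g y ∂μ := by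
  have hup := W2sq_map_le hT (hf.add hgT) hTopt
  have hlow := integral_add_integral_le_W2sq h0 hμ hf hgμ hdom
  rw [integral_map hT.aemeasurable hgc.aestronglyMeasurable]
  simp only [Pi.add_apply] at hup
  rw [integral_add hf hgT] at hup
  linarith

end Wasserstein

section BrenierPotential

variable {d : ℕ} {t : ℝ} {K : NNReal} {ψ : Rd d → ℝ}

/-- With `u = ψ + ‖·‖²/2`, this is `co((1 - t)‖·‖²/2 + t u)`, the potential of the map
pushing `μ₀` to `ω(t)`. -/
def brenierPotential (t : ℝ) (ψ : Rd d → ℝ) : Rd d → ℝ :=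
  convEnv fun x => ‖x‖ ^ 2 / 2 + t * ψ x

theorem abs_mul_sub_le_of_lipschitzWith (ht : 0 ≤ t) (hψ : LipschitzWith K ψ) (x : Rd d) :
    |t * ψ x - t * ψ 0| ≤ ‖x‖ ^ 2 / 2 + t ^ 2 * K ^ 2 / 2 := by
  have hx : |ψ x - ψ 0| ≤ K * ‖x‖ := by simpa [Real.dist_eq] using hψ.dist_le_mul x 0
  rw [← mul_sub, abs_mul, abs_of_nonneg ht]
  nlinarith [mul_le_mul_of_nonneg_left hx ht, sq_nonneg (‖x‖ - t * K)]

theorem le_sq_half_add_mul (ht : 0 ≤ t) (hψ : LipschitzWith K ψ) (x : Rd d) :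
    t * ψ 0 - t ^ 2 * K ^ 2 / 2 ≤ ‖x‖ ^ 2 / 2 + t * ψ x := by
  linarith [(abs_le.1 (abs_mul_sub_le_of_lipschitzWith ht hψ x)).1]

theorem le_brenierPotential (ht : 0 ≤ t) (hψ : LipschitzWith K ψ) (x : Rd d) :
    t * ψ 0 - t ^ 2 * K ^ 2 / 2 ≤ brenierPotential t ψ x :=
  le_convEnv (convexOn_const _ convex_univ) (le_sq_half_add_mul ht hψ) x

theorem brenierPotential_le (ht : 0 ≤ t) (hψ : LipschitzWith K ψ) (x : Rd d) :
    brenierPotential t ψ x ≤ ‖x‖ ^ 2 / 2 + t * ψ x :=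
  convEnv_le (le_sq_half_add_mul ht hψ) x

theorem brenierPotential_le_sq (ht : 0 ≤ t) (hψ : LipschitzWith K ψ) (x : Rd d) :
    brenierPotential t ψ x ≤ ‖x‖ ^ 2 + (t * ψ 0 + t ^ 2 * K ^ 2 / 2) := by
  linarith [brenierPotential_le ht hψ x, (abs_le.1 (abs_mul_sub_le_of_lipschitzWith ht hψ x)).2]

theorem convexOn_brenierPotential (ht : 0 ≤ t) (hψ : LipschitzWith K ψ) :
    ConvexOn ℝ univ (brenierPotential t ψ) :=
  convexOn_convEnv (le_sq_half_add_mul ht hψ)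

theorem norm_gradient_brenierPotential_le (ht : 0 ≤ t) (hψ : LipschitzWith K ψ) (x : Rd d) :
    ‖gradient (brenierPotential t ψ) x‖ ≤ 4 * ‖x‖ + (4 + t ^ 2 * K ^ 2) := by
  have := (convexOn_brenierPotential ht hψ).norm_gradient_le (le_brenierPotential ht hψ)
    (brenierPotential_le_sq ht hψ) x
  convert this using 3
  ring

theorem MemP2.integrable_brenierPotential {μ : Measure (Rd d)} (h : MemP2 μ) (ht : 0 ≤ t)
    (hψ : LipschitzWith K ψ) : Integrable (brenierPotential t ψ) μ := by
  have := h.1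
  refine (integrable_const (|t * ψ 0| + t ^ 2 * K ^ 2 / 2)).add h.integrable_sq |>.mono'
    (convexOn_brenierPotential ht hψ).locallyLipschitz.continuous.aestronglyMeasurable
    (.of_forall fun x => ?_)
  have hlow := le_brenierPotential ht hψ x
  have hup := brenierPotential_le_sq ht hψ x
  simp only [Real.norm_eq_abs, Pi.add_apply, abs_le]
  constructor <;> linarith [abs_nonneg (t * ψ 0), le_abs_self (t * ψ 0), neg_abs_le (t * ψ 0),
    sq_nonneg ‖x‖]

/-- By the Hopf–Lax formula, `z ↦ ⟪y, z⟫ + t 𝓗_t ψ(y) - ‖y‖²/2` is an affine minorant of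
`‖z‖²/2 + t ψ(z)`. -/
theorem inner_add_hopfLax_le_brenierPotential (ht : 0 < t) (hψ : LipschitzWith K ψ)
    (x y : Rd d) : ⟪y, x⟫ + (t * hopfLax t ψ y - ‖y‖ ^ 2 / 2) ≤ brenierPotential t ψ x := by
  refine le_convEnv (((innerₗ (Rd d) y).convexOn convex_univ).add_const _) (fun z => ?_) x
  have h := mul_le_mul_of_nonneg_left (hopfLax_le ht hψ y z) ht.le
  rw [show t * (‖y - z‖ ^ 2 / (2 * t) + ψ z) = ‖y - z‖ ^ 2 / 2 + t * ψ z by field_simp,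
    norm_sub_sq_real] at h
  change ⟪y, z⟫ + (t * hopfLax t ψ y - ‖y‖ ^ 2 / 2) ≤ _
  linarith

theorem sq_sub_two_mul_brenierPotential_add_le (ht : 0 < t) (hψ : LipschitzWith K ψ)
    (x y : Rd d) :
    ‖x‖ ^ 2 - 2 * brenierPotential t ψ x + 2 * t * hopfLax t ψ y ≤ ‖x - y‖ ^ 2 := by
  have := inner_add_hopfLax_le_brenierPotential ht hψ x y
  rw [norm_sub_sq_real, real_inner_comm]
  linarith

/-- The subgradient inequality and `brenierPotential t ψ ≤ ‖·‖²/2 + t ψ` turn the previous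
inequality into an equality at `y = ∇(brenierPotential t ψ) x`. -/
theorem norm_sub_gradient_brenierPotential_sq_le (ht : 0 < t) (hψ : LipschitzWith K ψ)
    {x : Rd d} (hd : DifferentiableAt ℝ (brenierPotential t ψ) x) :
    ‖x - gradient (brenierPotential t ψ) x‖ ^ 2 ≤ ‖x‖ ^ 2 - 2 * brenierPotential t ψ x
      + 2 * t * hopfLax t ψ (gradient (brenierPotential t ψ) x) := by
  set v := brenierPotential t ψ
  set p := gradient v x
  have hsupp : (‖p‖ ^ 2 / 2 - ⟪p, x⟫ + v x) / t ≤ hopfLax t ψ p := by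
    refine le_hopfLax fun z => ?_
    have hsub : v x + ⟪p, z - x⟫ ≤ v z :=
      (convexOn_brenierPotential ht.le hψ).add_inner_gradient_le hd z
    have hvz : v z ≤ ‖z‖ ^ 2 / 2 + t * ψ z := brenierPotential_le ht.le hψ z
    rw [show ‖p - z‖ ^ 2 / (2 * t) + ψ z = (‖p - z‖ ^ 2 / 2 + t * ψ z) / t by field_simp]
    refine div_le_div_of_nonneg_right ?_ ht.le
    rw [norm_sub_sq_real]
    rw [inner_sub_right] at hsub
    linarith
  rw [div_le_iff₀ ht] at hsupp
  rw [norm_sub_sq_real, real_inner_comm]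
  linarith

end BrenierPotential

/-- Lemma 4.4, part 1: the curve `ω(t) = [∇co((1−t)|·|²/2 + tu)]_# μ₀`
built from the viscosity (Hopf–Lax) solution of the Hamilton–Jacobi equation minimizes
`μ ↦ W₂²(μ₀,μ)/(2t) − ∫ φ(t,·) dμ` over `𝓟₂(ℝ^d)`. -/
theorem stmt_7 {d : ℕ} (φ : ℝ → Rd d → ℝ) (K : NNReal)
    (hlip : LipschitzWith K (φ 0))
    (hHL : ∀ t : ℝ, 0 < t → ∀ x : Rd d,
      φ t x = ⨅ y : Rd d, (‖x - y‖ ^ 2 / (2 * t) + φ 0 y))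
    (μ₀ : Measure (Rd d)) (hac : μ₀ ≪ volume) (h0 : MemP2 μ₀) :
    ∀ t : ℝ, 0 < t → ∀ μ : Measure (Rd d), MemP2 μ →
      W2sq μ₀ (μ₀.map (gradient (convEnv fun x => (1 - t) * (‖x‖ ^ 2 / 2)
          + t * (φ 0 x + ‖x‖ ^ 2 / 2)))) / (2 * t)
        - ∫ x, φ t x ∂(μ₀.map (gradient (convEnv fun x => (1 - t) * (‖x‖ ^ 2 / 2)
            + t * (φ 0 x + ‖x‖ ^ 2 / 2))))
      ≤ W2sq μ₀ μ / (2 * t) - ∫ x, φ t x ∂μ := by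
  intro t ht μ hμ
  have hpot : convEnv (fun x => (1 - t) * (‖x‖ ^ 2 / 2) + t * (φ 0 x + ‖x‖ ^ 2 / 2))
      = brenierPotential t (φ 0) := by
    simp only [brenierPotential]; congr; funext x; ring
  have hφt : φ t = hopfLax t (φ 0) := funext (hHL t ht)
  rw [hpot, hφt]
  have hφtlip := lipschitzWith_hopfLax ht hlip
  have key := W2sq_map_sub_integral_le h0 hμ (measurable_gradient _)
    (f := fun x => ‖x‖ ^ 2 - 2 * brenierPotential t (φ 0) x)
    (g := fun y => 2 * t * hopfLax t (φ 0) y)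
    (h0.integrable_sq.sub ((h0.integrable_brenierPotential ht.le hlip).const_mul 2))
    (continuous_const.mul hφtlip.continuous)
    ((hμ.integrable_of_lipschitzWith hφtlip).const_mul _)
    ((h0.integrable_lipschitzWith_comp hφtlip (measurable_gradient _)
      (norm_gradient_brenierPotential_le ht.le hlip)).const_mul _)
    (sq_sub_two_mul_brenierPotential_add_le ht hlip)
    (((convexOn_brenierPotential ht.le hlip).ae_differentiableAt.filter_mono hac.ae_le).mono
      fun x hx => norm_sub_gradient_brenierPotential_sq_le ht hlip hx)
  simp only [integral_const_mul] at key
  have h2t : (0 : ℝ) < 2 * t := by positivity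
  rw [div_sub' h2t.ne', div_sub' h2t.ne', div_le_div_iff_of_pos_right h2t]
  linarith
end
end

section
/- Let Ω ⊂ ℝ^d be convex compact, 𝓔 : 𝓟(Ω) → ℝ lower semi-continuous and λ-convex along generalized geodesics with λ ∈ ℝ₊, and let (ρ_n) be EVBDF2 iterates with time step τ, β = α−1, using the metric extrapolation ρ^α_{n−1} (the unique minimizer of ρ ↦ αW₂²(ρ,ρ_{n−1}) − βW₂²(ρ,ρ_{n−2})). Then at each step n and for every ν ∈ 𝓟(Ω): (1/(2(1−β)τ) + λ/2) W₂²(ρ_n, ν) − α W₂²(ν, ρ_{n−1})/(2(1−β)τ) + β W₂²(ν, ρ_{n−2})/(2(1−β)τ) ≤ 𝓔(ν) − 𝓔(ρ_n) + αβ W₂²(ρ_{n−1}, ρ_{n−2})/(2(1−β)τ) − W₂²(ρ_n, ρ^α_{n−1})/(2(1−β)τ). -/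
open MeasureTheory Set
open scoped ENNReal RealInnerProductSpace

noncomputable section

/-- `λ`-convexity along generalized geodesics on `𝓟(Ω)`: for every base point `ν₀` and
every glued 3-plan `γ` whose (0,1)- and (0,2)-marginals are optimal plans, the usual
`λ`-convexity inequality holds along the induced curve. -/
def LambdaConvexGG {d : ℕ} (Ω : Set (Rd d)) (𝓔 : Measure (Rd d) → ℝ) (lam : ℝ) : Prop :=
  ∀ ν₀ ν₁ ν₂ : Measure (Rd d), ProbOn Ω ν₀ → ProbOn Ω ν₁ → ProbOn Ω ν₂ →
    ∀ γ : Measure (Rd d × Rd d × Rd d),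
      IsOptimalPlan (γ.map fun p => (p.1, p.2.1)) ν₀ ν₁ →
      IsOptimalPlan (γ.map fun p => (p.1, p.2.2)) ν₀ ν₂ →
      ∀ t ∈ Icc (0:ℝ) 1,
        𝓔 (γ.map fun p => (1 - t) • p.2.1 + t • p.2.2)
          ≤ (1 - t) * 𝓔 ν₁ + t * 𝓔 ν₂
            - lam * t * (1 - t) / 2 * (∫ p, ‖p.2.1 - p.2.2‖ ^ 2 ∂γ)


/-
Everything is compared along interpolations `((1 - t) x + t y)_# γ` of plans `γ`. Gluing almost
optimal plans from a base point `σ` to `μ₀` and to `μ₁` produces a plan between `μ₀` and `μ₁` along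
which `W₂²(·, σ)` is `2`-convex; conversely the identity
`‖(1 - t) a + t b - z‖² + t (1 - t) ‖a - b‖² = (1 - t) ‖a - z‖² + t ‖b - z‖²`
makes `W₂²(·, σ)` `2`-semiconcave along every plan. Using these interpolations as competitors in the
minimisation problems defining `ρ_n` and `ρ^α_{n-1}`, dividing by `t` and letting `t → 0` gives the
discrete EVI for `ρ_n` and the variational inequality
`𝓕(ρ^α_{n-1}) + W₂²(ν, ρ^α_{n-1}) ≤ 𝓕(ν)`. The bound `𝓕 ≥ -αβ W₂²(ρ_{n-1}, ρ_{n-2})` is the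
pointwise inequality `β ‖a - c‖² ≤ α ‖a - b‖² + αβ ‖b - c‖²` integrated against a glued plan.
-/
open ProbabilityTheory Filter Topology

lemma le_of_forall_mem_Ioo_le_add_mul {x y C : ℝ} (h : ∀ t ∈ Ioo (0 : ℝ) 1, x ≤ y + t * C) :
    x ≤ y := by
  have hlim : Tendsto (fun t : ℝ => y + t * C) (𝓝[>] 0) (𝓝 y) := by
    have : Tendsto (fun t : ℝ => y + t * C) (𝓝 0) (𝓝 (y + 0 * C)) :=
      (continuous_const.add (continuous_id.mul continuous_const)).tendsto 0
    simpa using this.mono_left nhdsWithin_le_nhds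
  refine ge_of_tendsto hlim ?_
  filter_upwards [Ioo_mem_nhdsGT zero_lt_one] with t ht using h t ht

lemma norm_interp_sub_sq_add {E : Type*} [NormedAddCommGroup E] [InnerProductSpace ℝ E]
    (t : ℝ) (a b z : E) :
    ‖(1 - t) • a + t • b - z‖ ^ 2 + t * (1 - t) * ‖a - b‖ ^ 2
      = (1 - t) * ‖a - z‖ ^ 2 + t * ‖b - z‖ ^ 2 := by
  have h1 : (1 - t) • a + t • b - z = (1 - t) • (a - z) + t • (b - z) := by module
  have h2 : a - b = (a - z) - (b - z) := by abel
  rw [h1, h2, norm_add_sq_real, norm_sub_sq_real, norm_smul, norm_smul, real_inner_smul_left,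
    real_inner_smul_right, Real.norm_eq_abs, Real.norm_eq_abs, mul_pow, mul_pow, sq_abs, sq_abs]
  ring

lemma integral_norm_interp_sub_sq {A E : Type*} [MeasurableSpace A] [NormedAddCommGroup E]
    [InnerProductSpace ℝ E] {Γ : Measure A} {u v w : A → E} (t : ℝ)
    (huv : Integrable (fun a => ‖u a - v a‖ ^ 2) Γ)
    (huw : Integrable (fun a => ‖u a - w a‖ ^ 2) Γ)
    (hvw : Integrable (fun a => ‖v a - w a‖ ^ 2) Γ) :
    ∫ a, ‖(1 - t) • u a + t • v a - w a‖ ^ 2 ∂Γ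
      = (1 - t) * ∫ a, ‖u a - w a‖ ^ 2 ∂Γ + t * ∫ a, ‖v a - w a‖ ^ 2 ∂Γ
        - t * (1 - t) * ∫ a, ‖u a - v a‖ ^ 2 ∂Γ := by
  calc ∫ a, ‖(1 - t) • u a + t • v a - w a‖ ^ 2 ∂Γ
      = ∫ a, ((1 - t) * ‖u a - w a‖ ^ 2 + t * ‖v a - w a‖ ^ 2
          - t * (1 - t) * ‖u a - v a‖ ^ 2) ∂Γ :=
        integral_congr_ae (ae_of_all _ fun a => by
          linarith [norm_interp_sub_sq_add t (u a) (v a) (w a)])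
    _ = _ := by
        have hsum : Integrable (fun a => (1 - t) * ‖u a - w a‖ ^ 2 + t * ‖v a - w a‖ ^ 2) Γ :=
          (huw.const_mul _).add (hvw.const_mul _)
        rw [integral_sub hsum (huv.const_mul _),
          integral_add (huw.const_mul _) (hvw.const_mul _), integral_const_mul,
          integral_const_mul, integral_const_mul]

lemma mul_norm_sub_sq_le {E : Type*} [SeminormedAddCommGroup E] {β : ℝ} (hβ : 0 ≤ β)
    (a b c : E) :
    β * ‖a - c‖ ^ 2 ≤ (1 + β) * ‖a - b‖ ^ 2 + β * (1 + β) * ‖b - c‖ ^ 2 := by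
  have htri : ‖a - c‖ ≤ ‖a - b‖ + ‖b - c‖ := norm_sub_le_norm_sub_add_norm_sub a b c
  have hsq : ‖a - c‖ ^ 2 ≤ (‖a - b‖ + ‖b - c‖) ^ 2 := pow_le_pow_left₀ (norm_nonneg _) htri 2
  nlinarith [mul_le_mul_of_nonneg_left hsq hβ, sq_nonneg (‖a - b‖ - β * ‖b - c‖)]

lemma integrable_norm_sub_sq {A E : Type*} [MeasurableSpace A] [NormedAddCommGroup E]
    {Γ : Measure A} [IsFiniteMeasure Γ] {S : Set E} (hS : Bornology.IsBounded S)
    {u v : A → E} (hu : AEStronglyMeasurable u Γ) (hv : AEStronglyMeasurable v Γ)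
    (huS : ∀ᵐ a ∂Γ, u a ∈ S) (hvS : ∀ᵐ a ∂Γ, v a ∈ S) :
    Integrable (fun a => ‖u a - v a‖ ^ 2) Γ := by
  obtain ⟨R, hR⟩ := hS.exists_norm_le
  refine Integrable.of_bound ((hu.sub hv).norm.pow 2) ((R + R) ^ 2) ?_
  filter_upwards [huS, hvS] with a hua hva
  rw [Real.norm_eq_abs, abs_of_nonneg (by positivity)]
  exact pow_le_pow_left₀ (norm_nonneg _)
    ((norm_sub_le _ _).trans (add_le_add (hR _ hua) (hR _ hva))) 2

section Gluing

variable {A B C : Type*} [MeasurableSpace A] [MeasurableSpace B] [MeasurableSpace C]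

lemma MeasureTheory.Measure.map_prodMap_compProd_comap (m : Measure A) [SFinite m] (κ : Kernel B C)
    [IsSFiniteKernel κ] {e : A → B} (he : Measurable e) :
    (m ⊗ₘ κ.comap e he).map (Prod.map e id) = m.map e ⊗ₘ κ := by
  ext s hs
  rw [Measure.map_apply (he.prodMap measurable_id) hs,
    Measure.compProd_apply (he.prodMap measurable_id hs), Measure.compProd_apply hs,
    lintegral_map (Kernel.measurable_kernel_prodMk_left hs) he]
  rfl

lemma exists_gluing [StandardBorelSpace C] [Nonempty C] (m : Measure A) [IsProbabilityMeasure m]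
    (η : Measure (B × C)) [IsFiniteMeasure η] {e : A → B} (he : Measurable e)
    (h : m.map e = η.map Prod.fst) :
    ∃ Γ : Measure (A × C), IsProbabilityMeasure Γ ∧ Γ.map Prod.fst = m ∧
      Γ.map (Prod.map e id) = η := by
  refine ⟨m ⊗ₘ η.condKernel.comap e he, inferInstance, Measure.fst_compProd m _, ?_⟩
  rw [Measure.map_prodMap_compProd_comap m η.condKernel he, h]
  exact η.disintegrate _

end Gluing

section Wasserstein

variable {d : ℕ} {Ω : Set (Rd d)}

def interpolant (t : ℝ) (γ : Measure (Rd d × Rd d)) : Measure (Rd d) :=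
  γ.map fun p => (1 - t) • p.1 + t • p.2

lemma measurable_interp (t : ℝ) : Measurable fun p : Rd d × Rd d => (1 - t) • p.1 + t • p.2 := by
  fun_prop

lemma IsCoupling.isProbabilityMeasure {γ : Measure (Rd d × Rd d)} {μ ν : Measure (Rd d)}
    [IsProbabilityMeasure μ] (h : IsCoupling γ μ ν) : IsProbabilityMeasure γ := by
  have : IsProbabilityMeasure (γ.map Prod.fst) := h.1 ▸ inferInstance
  exact Measure.isProbabilityMeasure_of_map Prod.fst

lemma isCoupling_map_prodMk {A : Type*} [MeasurableSpace A] (Γ : Measure A) {u v : A → Rd d}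
    (hu : Measurable u) (hv : Measurable v) :
    IsCoupling (Γ.map fun a => (u a, v a)) (Γ.map u) (Γ.map v) :=
  ⟨by rw [Measure.map_map measurable_fst (hu.prodMk hv)]; rfl,
    by rw [Measure.map_map measurable_snd (hu.prodMk hv)]; rfl⟩

lemma W2sqE_le_transportCost {γ : Measure (Rd d × Rd d)} {μ ν : Measure (Rd d)}
    (h : IsCoupling γ μ ν) : W2sqE μ ν ≤ transportCost γ :=
  iInf₂_le γ h

lemma transportCost_eq_ofReal_integral {γ : Measure (Rd d × Rd d)}
    (hi : Integrable (fun p : Rd d × Rd d => ‖p.1 - p.2‖ ^ 2) γ) :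
    transportCost γ = ENNReal.ofReal (∫ p, ‖p.1 - p.2‖ ^ 2 ∂γ) :=
  (ofReal_integral_eq_lintegral_ofReal hi (ae_of_all _ fun _ => by positivity)).symm

lemma W2sq_le_integral {γ : Measure (Rd d × Rd d)} {μ ν : Measure (Rd d)} (h : IsCoupling γ μ ν)
    (hi : Integrable (fun p : Rd d × Rd d => ‖p.1 - p.2‖ ^ 2) γ) :
    W2sq μ ν ≤ ∫ p, ‖p.1 - p.2‖ ^ 2 ∂γ :=
  ENNReal.toReal_le_of_le_ofReal (integral_nonneg fun _ => by positivity)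
    (transportCost_eq_ofReal_integral hi ▸ W2sqE_le_transportCost h)

lemma W2sq_map_le_integral {A : Type*} [MeasurableSpace A] {Γ : Measure A} {u v : A → Rd d}
    (hu : Measurable u) (hv : Measurable v) (hi : Integrable (fun a => ‖u a - v a‖ ^ 2) Γ) :
    W2sq (Γ.map u) (Γ.map v) ≤ ∫ a, ‖u a - v a‖ ^ 2 ∂Γ := by
  have hmeas : Measurable fun p : Rd d × Rd d => ‖p.1 - p.2‖ ^ 2 := by fun_prop
  have hpair := hu.prodMk hv
  refine (W2sq_le_integral (isCoupling_map_prodMk Γ hu hv) ?_).trans_eq ?_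
  · exact (integrable_map_measure hmeas.aestronglyMeasurable hpair.aemeasurable).2 hi
  · exact integral_map hpair.aemeasurable hmeas.aestronglyMeasurable

lemma exists_isCoupling_integral_le {μ ν : Measure (Rd d)} (hfin : W2sqE μ ν ≠ ⊤) {ε : ℝ}
    (hε : 0 < ε) :
    ∃ γ, IsCoupling γ μ ν ∧ ∫ p, ‖p.1 - p.2‖ ^ 2 ∂γ ≤ W2sq μ ν + ε := by
  have hlt : W2sqE μ ν < W2sqE μ ν + ENNReal.ofReal ε :=
    ENNReal.lt_add_right hfin (ENNReal.ofReal_pos.2 hε).ne'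
  simp only [W2sqE, iInf_lt_iff] at hlt
  obtain ⟨γ, hγ, hcost⟩ := hlt
  have hmeas : AEStronglyMeasurable (fun p : Rd d × Rd d => ‖p.1 - p.2‖ ^ 2) γ := by
    fun_prop
  refine ⟨γ, hγ, ?_⟩
  rw [integral_eq_lintegral_of_nonneg_ae (ae_of_all _ fun _ => by positivity) hmeas, W2sq,
    ← ENNReal.toReal_ofReal hε.le, ← ENNReal.toReal_add hfin ENNReal.ofReal_ne_top]
  exact ENNReal.toReal_mono (ENNReal.add_ne_top.2 ⟨hfin, ENNReal.ofReal_ne_top⟩) hcost.le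

lemma W2sqE_comm (μ ν : Measure (Rd d)) : W2sqE μ ν = W2sqE ν μ := by
  suffices key : ∀ μ ν : Measure (Rd d), W2sqE μ ν ≤ W2sqE ν μ from
    le_antisymm (key μ ν) (key ν μ)
  intro μ ν
  refine le_iInf₂ fun γ hγ => ?_
  have hswap : IsCoupling (γ.map Prod.swap) μ ν :=
    ⟨by rw [Measure.map_map measurable_fst measurable_swap]; exact hγ.2,
      by rw [Measure.map_map measurable_snd measurable_swap]; exact hγ.1⟩
  refine (W2sqE_le_transportCost hswap).trans_eq ?_
  rw [transportCost, transportCost, lintegral_map (by fun_prop) measurable_swap]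
  simp only [Prod.fst_swap, Prod.snd_swap, norm_sub_rev]

lemma W2sq_comm (μ ν : Measure (Rd d)) : W2sq μ ν = W2sq ν μ := by
  rw [W2sq, W2sq, W2sqE_comm]

lemma ae_mem_of_map_eq {A : Type*} [MeasurableSpace A] {Γ : Measure A} {u : A → Rd d}
    (hu : Measurable u) {μ : Measure (Rd d)} (h : Γ.map u = μ) (hμ : ProbOn Ω μ) :
    ∀ᵐ a ∂Γ, u a ∈ Ω :=
  ae_of_ae_map hu.aemeasurable (h ▸ mem_ae_iff.2 hμ.2)

lemma ProbOn.nonempty {μ : Measure (Rd d)} (h : ProbOn Ω μ) : Ω.Nonempty := by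
  rw [nonempty_iff_ne_empty]
  rintro rfl
  simpa [h.1.measure_univ] using h.2

lemma integrable_norm_sub_sq_of_map_eq (hΩ : Bornology.IsBounded Ω) {A : Type*}
    [MeasurableSpace A] {Γ : Measure A} [IsFiniteMeasure Γ] {u v : A → Rd d}
    (hu : Measurable u) (hv : Measurable v) {μ ν : Measure (Rd d)} (hμ : ProbOn Ω μ)
    (hν : ProbOn Ω ν) (huμ : Γ.map u = μ) (hvν : Γ.map v = ν) :
    Integrable (fun a => ‖u a - v a‖ ^ 2) Γ :=
  integrable_norm_sub_sq hΩ hu.aestronglyMeasurable hv.aestronglyMeasurable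
    (ae_mem_of_map_eq hu huμ hμ) (ae_mem_of_map_eq hv hvν hν)

lemma IsCoupling.integrable_cost (hΩ : Bornology.IsBounded Ω) {γ : Measure (Rd d × Rd d)}
    {μ ν : Measure (Rd d)} (hμ : ProbOn Ω μ) (hν : ProbOn Ω ν) (h : IsCoupling γ μ ν) :
    Integrable (fun p : Rd d × Rd d => ‖p.1 - p.2‖ ^ 2) γ := by
  have := hμ.1
  have := h.isProbabilityMeasure
  exact integrable_norm_sub_sq_of_map_eq hΩ measurable_fst measurable_snd hμ hν h.1 h.2

lemma ProbOn.W2sqE_ne_top (hΩ : Bornology.IsBounded Ω) {μ ν : Measure (Rd d)}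
    (hμ : ProbOn Ω μ) (hν : ProbOn Ω ν) : W2sqE μ ν ≠ ⊤ := by
  have := hμ.1
  have := hν.1
  have hprod : IsCoupling (μ.prod ν) μ ν := ⟨Measure.fst_prod, Measure.snd_prod⟩
  refine ne_top_of_le_ne_top ?_ (W2sqE_le_transportCost hprod)
  exact ((hprod.integrable_cost hΩ hμ hν).lintegral_lt_top).ne

lemma ProbOn.interpolant (hΩm : MeasurableSet Ω) (hΩconv : Convex ℝ Ω)
    {μ₀ μ₁ : Measure (Rd d)} (h₀ : ProbOn Ω μ₀) (h₁ : ProbOn Ω μ₁)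
    {γ : Measure (Rd d × Rd d)} (hγ : IsCoupling γ μ₀ μ₁) {t : ℝ} (ht : t ∈ Icc (0 : ℝ) 1) :
    ProbOn Ω (interpolant t γ) := by
  have := h₀.1
  have := hγ.isProbabilityMeasure
  refine ⟨Measure.isProbabilityMeasure_map (measurable_interp t).aemeasurable, ?_⟩
  rw [_root_.interpolant, Measure.map_apply (measurable_interp t) hΩm.compl, preimage_compl,
    ← mem_ae_iff]
  filter_upwards [ae_mem_of_map_eq measurable_fst hγ.1 h₀,
    ae_mem_of_map_eq measurable_snd hγ.2 h₁] with p hp₀ hp₁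
  exact hΩconv hp₀ hp₁ (by linarith [ht.2]) ht.1 (by ring)

lemma exists_gluing_near_optimal (hΩ : Bornology.IsBounded Ω) {μ ν ρ : Measure (Rd d)}
    (hμ : ProbOn Ω μ) (hν : ProbOn Ω ν) (hρ : ProbOn Ω ρ) {ε : ℝ} (hε : 0 < ε) :
    ∃ Γ : Measure ((Rd d × Rd d) × Rd d), IsProbabilityMeasure Γ ∧
      Γ.map (fun q => q.1.1) = μ ∧ Γ.map (fun q => q.1.2) = ν ∧ Γ.map (fun q => q.2) = ρ ∧
      ∫ q, ‖q.1.1 - q.1.2‖ ^ 2 ∂Γ ≤ W2sq μ ν + ε ∧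
      ∫ q, ‖q.1.2 - q.2‖ ^ 2 ∂Γ ≤ W2sq ν ρ + ε := by
  obtain ⟨P, hP, hPε⟩ := exists_isCoupling_integral_le (hμ.W2sqE_ne_top hΩ hν) hε
  obtain ⟨Q, hQ, hQε⟩ := exists_isCoupling_integral_le (hν.W2sqE_ne_top hΩ hρ) hε
  have := hμ.1
  have := hν.1
  have := hP.isProbabilityMeasure
  have := hQ.isProbabilityMeasure
  obtain ⟨Γ, hΓ, hΓP, hΓQ⟩ := exists_gluing P Q measurable_snd (hP.2.trans hQ.1.symm)
  have hcost : Measurable fun p : Rd d × Rd d => ‖p.1 - p.2‖ ^ 2 := by fun_prop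
  refine ⟨Γ, hΓ, ?_, ?_, ?_, ?_, ?_⟩
  · rw [← hP.1, ← hΓP, Measure.map_map measurable_fst measurable_fst]; rfl
  · rw [← hP.2, ← hΓP, Measure.map_map measurable_snd measurable_fst]; rfl
  · rw [← hQ.2, ← hΓQ, Measure.map_map measurable_snd (by fun_prop)]; rfl
  · rwa [← hΓP, integral_map measurable_fst.aemeasurable hcost.aestronglyMeasurable] at hPε
  · rwa [← hΓQ, integral_map (by fun_prop) hcost.aestronglyMeasurable] at hQε

lemma mul_W2sq_le_add (hΩ : Bornology.IsBounded Ω) {β : ℝ} (hβ : 0 ≤ β)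
    {μ ν ρ : Measure (Rd d)} (hμ : ProbOn Ω μ) (hν : ProbOn Ω ν) (hρ : ProbOn Ω ρ) :
    β * W2sq μ ρ ≤ (1 + β) * W2sq μ ν + β * (1 + β) * W2sq ν ρ := by
  refine le_of_forall_mem_Ioo_le_add_mul (C := (1 + β) ^ 2) fun ε hε => ?_
  obtain ⟨Γ, hΓ, hΓμ, hΓν, hΓρ, hεμν, hενρ⟩ := exists_gluing_near_optimal hΩ hμ hν hρ hε.1
  have hx : Measurable fun q : (Rd d × Rd d) × Rd d => q.1.1 := by fun_prop
  have hy : Measurable fun q : (Rd d × Rd d) × Rd d => q.1.2 := by fun_prop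
  have hz : Measurable fun q : (Rd d × Rd d) × Rd d => q.2 := by fun_prop
  have hxy := integrable_norm_sub_sq_of_map_eq hΩ hx hy hμ hν hΓμ hΓν
  have hyz := integrable_norm_sub_sq_of_map_eq hΩ hy hz hν hρ hΓν hΓρ
  have hxz := integrable_norm_sub_sq_of_map_eq hΩ hx hz hμ hρ hΓμ hΓρ
  have hW : W2sq μ ρ ≤ ∫ q, ‖q.1.1 - q.2‖ ^ 2 ∂Γ := hΓμ ▸ hΓρ ▸ W2sq_map_le_integral hx hz hxz
  have hpt : ∫ q, β * ‖q.1.1 - q.2‖ ^ 2 ∂Γ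
      ≤ ∫ q, ((1 + β) * ‖q.1.1 - q.1.2‖ ^ 2 + β * (1 + β) * ‖q.1.2 - q.2‖ ^ 2) ∂Γ :=
    integral_mono (hxz.const_mul β) ((hxy.const_mul _).add (hyz.const_mul _))
      fun q => mul_norm_sub_sq_le hβ _ _ _
  rw [integral_const_mul, integral_add (hxy.const_mul _) (hyz.const_mul _), integral_const_mul,
    integral_const_mul] at hpt
  nlinarith [mul_le_mul_of_nonneg_left hW hβ,
    mul_le_mul_of_nonneg_left hεμν (by positivity : (0 : ℝ) ≤ 1 + β),
    mul_le_mul_of_nonneg_left hενρ (by positivity : (0 : ℝ) ≤ β * (1 + β))]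

lemma exists_isCoupling_W2sq_interpolant_le (hΩc : IsCompact Ω) (hΩconv : Convex ℝ Ω)
    {σ μ₀ μ₁ : Measure (Rd d)} (hσ : ProbOn Ω σ) (h₀ : ProbOn Ω μ₀) (h₁ : ProbOn Ω μ₁)
    {t : ℝ} (ht : t ∈ Icc (0 : ℝ) 1) {ε : ℝ} (hε : 0 < ε) :
    ∃ γ, IsCoupling γ μ₀ μ₁ ∧ W2sq (interpolant t γ) σ
      ≤ (1 - t) * W2sq μ₀ σ + t * W2sq μ₁ σ - t * (1 - t) * ∫ p, ‖p.1 - p.2‖ ^ 2 ∂γ + ε := by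
  have hΩ := hΩc.isBounded
  obtain ⟨Γ, hΓ, hΓ₀, hΓσ, hΓ₁, hε₀, hε₁⟩ := exists_gluing_near_optimal hΩ h₀ hσ h₁ hε
  have hx : Measurable fun q : (Rd d × Rd d) × Rd d => q.1.1 := by fun_prop
  have hz : Measurable fun q : (Rd d × Rd d) × Rd d => q.1.2 := by fun_prop
  have hy : Measurable fun q : (Rd d × Rd d) × Rd d => q.2 := by fun_prop
  have hω : Measurable fun q : (Rd d × Rd d) × Rd d => (1 - t) • q.1.1 + t • q.2 := by fun_prop
  have hγ : IsCoupling (Γ.map fun q => (q.1.1, q.2)) μ₀ μ₁ :=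
    hΓ₀ ▸ hΓ₁ ▸ isCoupling_map_prodMk Γ hx hy
  have hinterp : interpolant t (Γ.map fun q => (q.1.1, q.2))
      = Γ.map fun q => (1 - t) • q.1.1 + t • q.2 := by
    rw [interpolant, Measure.map_map (measurable_interp t) (hx.prodMk hy)]; rfl
  have hωP := hinterp ▸ ProbOn.interpolant hΩc.isClosed.measurableSet hΩconv h₀ h₁ hγ ht
  have hW : W2sq (interpolant t (Γ.map fun q => (q.1.1, q.2))) σ
      ≤ ∫ q, ‖(1 - t) • q.1.1 + t • q.2 - q.1.2‖ ^ 2 ∂Γ :=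
    hinterp ▸ hΓσ ▸ W2sq_map_le_integral hω hz
      (integrable_norm_sub_sq_of_map_eq hΩ hω hz hωP hσ rfl hΓσ)
  have hcost : ∫ p, ‖p.1 - p.2‖ ^ 2 ∂(Γ.map fun q => (q.1.1, q.2))
      = ∫ q, ‖q.1.1 - q.2‖ ^ 2 ∂Γ :=
    integral_map (hx.prodMk hy).aemeasurable (by fun_prop)
  have hzy : ∫ q, ‖q.2 - q.1.2‖ ^ 2 ∂Γ = ∫ q, ‖q.1.2 - q.2‖ ^ 2 ∂Γ := by
    simp only [norm_sub_rev]
  rw [integral_norm_interp_sub_sq t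
    (integrable_norm_sub_sq_of_map_eq hΩ hx hy h₀ h₁ hΓ₀ hΓ₁)
    (integrable_norm_sub_sq_of_map_eq hΩ hx hz h₀ hσ hΓ₀ hΓσ)
    (integrable_norm_sub_sq_of_map_eq hΩ hy hz h₁ hσ hΓ₁ hΓσ), hzy] at hW
  refine ⟨_, hγ, ?_⟩
  rw [hcost, W2sq_comm μ₁]
  nlinarith [mul_le_mul_of_nonneg_left hε₀ (sub_nonneg.2 ht.2),
    mul_le_mul_of_nonneg_left hε₁ ht.1]

lemma le_W2sq_interpolant (hΩc : IsCompact Ω) (hΩconv : Convex ℝ Ω)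
    {σ μ₀ μ₁ : Measure (Rd d)} (hσ : ProbOn Ω σ) (h₀ : ProbOn Ω μ₀) (h₁ : ProbOn Ω μ₁)
    {γ : Measure (Rd d × Rd d)} (hγ : IsCoupling γ μ₀ μ₁) {t : ℝ} (ht : t ∈ Icc (0 : ℝ) 1) :
    (1 - t) * W2sq μ₀ σ + t * W2sq μ₁ σ - t * (1 - t) * ∫ p, ‖p.1 - p.2‖ ^ 2 ∂γ
      ≤ W2sq (interpolant t γ) σ := by
  have hΩ := hΩc.isBounded
  have hωP := ProbOn.interpolant hΩc.isClosed.measurableSet hΩconv h₀ h₁ hγ ht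
  refine le_of_forall_mem_Ioo_le_add_mul (C := 1) fun ε hε => ?_
  obtain ⟨η, hη, hηε⟩ := exists_isCoupling_integral_le (hωP.W2sqE_ne_top hΩ hσ) hε.1
  have := h₀.1
  have := hωP.1
  have := hγ.isProbabilityMeasure
  have := hη.isProbabilityMeasure
  obtain ⟨Γ, hΓ, hΓγ, hΓη⟩ := exists_gluing γ η (measurable_interp t) hη.1.symm
  have hx : Measurable fun q : (Rd d × Rd d) × Rd d => q.1.1 := by fun_prop
  have hy : Measurable fun q : (Rd d × Rd d) × Rd d => q.1.2 := by fun_prop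
  have hz : Measurable fun q : (Rd d × Rd d) × Rd d => q.2 := by fun_prop
  have hΓ₀ : Γ.map (fun q => q.1.1) = μ₀ := by
    rw [← hγ.1, ← hΓγ, Measure.map_map measurable_fst measurable_fst]; rfl
  have hΓ₁ : Γ.map (fun q => q.1.2) = μ₁ := by
    rw [← hγ.2, ← hΓγ, Measure.map_map measurable_snd measurable_fst]; rfl
  have hΓσ : Γ.map (fun q => q.2) = σ := by
    rw [← hη.2, ← hΓη, Measure.map_map measurable_snd (by fun_prop)]; rfl
  have hcost : Measurable fun p : Rd d × Rd d => ‖p.1 - p.2‖ ^ 2 := by fun_prop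
  have hγcost : ∫ p, ‖p.1 - p.2‖ ^ 2 ∂γ = ∫ q, ‖q.1.1 - q.1.2‖ ^ 2 ∂Γ := by
    rw [← hΓγ, integral_map measurable_fst.aemeasurable hcost.aestronglyMeasurable]
  have hηcost : ∫ p, ‖p.1 - p.2‖ ^ 2 ∂η = ∫ q, ‖(1 - t) • q.1.1 + t • q.1.2 - q.2‖ ^ 2 ∂Γ := by
    rw [← hΓη, integral_map (by fun_prop) hcost.aestronglyMeasurable]; rfl
  have hW₀ : W2sq μ₀ σ ≤ ∫ q, ‖q.1.1 - q.2‖ ^ 2 ∂Γ :=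
    hΓ₀ ▸ hΓσ ▸ W2sq_map_le_integral hx hz
      (integrable_norm_sub_sq_of_map_eq hΩ hx hz h₀ hσ hΓ₀ hΓσ)
  have hW₁ : W2sq μ₁ σ ≤ ∫ q, ‖q.1.2 - q.2‖ ^ 2 ∂Γ :=
    hΓ₁ ▸ hΓσ ▸ W2sq_map_le_integral hy hz
      (integrable_norm_sub_sq_of_map_eq hΩ hy hz h₁ hσ hΓ₁ hΓσ)
  rw [hηcost, integral_norm_interp_sub_sq t
    (integrable_norm_sub_sq_of_map_eq hΩ hx hy h₀ h₁ hΓ₀ hΓ₁)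
    (integrable_norm_sub_sq_of_map_eq hΩ hx hz h₀ hσ hΓ₀ hΓσ)
    (integrable_norm_sub_sq_of_map_eq hΩ hy hz h₁ hσ hΓ₁ hΓσ), ← hγcost] at hηε
  nlinarith [mul_le_mul_of_nonneg_left hW₀ (sub_nonneg.2 ht.2),
    mul_le_mul_of_nonneg_left hW₁ ht.1]

lemma isOptimalPlan_dirac_left {z : Rd d} {μ : Measure (Rd d)} {γ : Measure (Rd d × Rd d)}
    (hγ : IsCoupling γ (Measure.dirac z) μ) : IsOptimalPlan γ (Measure.dirac z) μ := by
  have hcost : ∀ γ', IsCoupling γ' (Measure.dirac z) μ →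
      transportCost γ' = ∫⁻ y, ENNReal.ofReal (‖z - y‖ ^ 2) ∂μ := by
    intro γ' hγ'
    have hδ : ∀ᵐ x ∂(γ'.map Prod.fst), x = z := by simp [hγ'.1, ae_dirac_eq]
    have hfst : ∀ᵐ p ∂γ', p.1 = z := ae_of_ae_map measurable_fst.aemeasurable hδ
    rw [transportCost, ← hγ'.2, lintegral_map (by fun_prop) measurable_snd]
    exact lintegral_congr_ae (by filter_upwards [hfst] with p hp using by rw [hp])
  refine ⟨hγ, le_antisymm ?_ (W2sqE_le_transportCost hγ)⟩
  exact le_iInf₂ fun γ' hγ' => (hcost γ hγ).trans_le (hcost γ' hγ').ge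

lemma LambdaConvexGG.le_of_isCoupling {𝓔 : Measure (Rd d) → ℝ} {lam : ℝ}
    (hgg : LambdaConvexGG Ω 𝓔 lam) {μ₀ μ₁ : Measure (Rd d)} (h₀ : ProbOn Ω μ₀)
    (h₁ : ProbOn Ω μ₁) {γ : Measure (Rd d × Rd d)} (hγ : IsCoupling γ μ₀ μ₁) {t : ℝ}
    (ht : t ∈ Icc (0 : ℝ) 1) :
    𝓔 (interpolant t γ)
      ≤ (1 - t) * 𝓔 μ₀ + t * 𝓔 μ₁ - lam * t * (1 - t) / 2 * ∫ p, ‖p.1 - p.2‖ ^ 2 ∂γ := by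
  obtain ⟨z, hz⟩ := h₀.nonempty
  have := h₀.1
  have := hγ.isProbabilityMeasure
  have hδ : ProbOn Ω (Measure.dirac z) := ⟨inferInstance, by simp [hz]⟩
  have hδγ : γ.map (fun _ => z) = Measure.dirac z := by
    rw [Measure.map_const, measure_univ, one_smul]
  have hlift : Measurable fun p : Rd d × Rd d => (z, p) := by fun_prop
  -- A plan with first marginal `δ_z` is optimal, so every interpolation of `γ` is a
  -- generalized geodesic based at `δ_z`.
  have hopt : ∀ {f : Rd d × Rd d → Rd d} {μ : Measure (Rd d)}, Measurable f → γ.map f = μ →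
      IsOptimalPlan ((γ.map fun p => (z, p)).map fun q => (q.1, f q.2)) (Measure.dirac z) μ := by
    intro f μ hf hfμ
    rw [Measure.map_map (by fun_prop) hlift]
    exact isOptimalPlan_dirac_left (hδγ ▸ hfμ ▸ isCoupling_map_prodMk γ measurable_const hf)
  have hconv := hgg _ μ₀ μ₁ hδ h₀ h₁ (γ.map fun p => (z, p))
    (hopt measurable_fst hγ.1) (hopt measurable_snd hγ.2) t ht
  rwa [Measure.map_map (by fun_prop) hlift,
    integral_map hlift.aemeasurable (by fun_prop)] at hconv

theorem discrete_evi_of_isMinOn (hΩc : IsCompact Ω) (hΩconv : Convex ℝ Ω)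
    {𝓔 : Measure (Rd d) → ℝ} {lam : ℝ} (hgg : LambdaConvexGG Ω 𝓔 lam) (hlam : 0 ≤ lam)
    {c : ℝ} (hc : 0 ≤ c) {σ ρ ν : Measure (Rd d)} (hσ : ProbOn Ω σ) (hρ : ProbOn Ω ρ)
    (hν : ProbOn Ω ν) (hmin : IsMinOn (fun μ => c * W2sq μ σ + 𝓔 μ) {μ | ProbOn Ω μ} ρ) :
    (c + lam / 2) * W2sq ρ ν ≤ 𝓔 ν - 𝓔 ρ + c * W2sq ν σ - c * W2sq ρ σ := by
  refine le_of_forall_mem_Ioo_le_add_mul (C := c + (c + lam / 2) * W2sq ρ ν) fun t ht => ?_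
  have ht' : t ∈ Icc (0 : ℝ) 1 := Ioo_subset_Icc_self ht
  obtain ⟨γ, hγ, hWγ⟩ := exists_isCoupling_W2sq_interpolant_le hΩc hΩconv hσ hρ hν ht'
    (mul_pos ht.1 ht.1)
  have hωP := ProbOn.interpolant hΩc.isClosed.measurableSet hΩconv hρ hν hγ ht'
  have hminω : c * W2sq ρ σ + 𝓔 ρ ≤ c * W2sq (interpolant t γ) σ + 𝓔 (interpolant t γ) :=
    isMinOn_iff.1 hmin _ hωP
  have hEω := hgg.le_of_isCoupling hρ hν hγ ht'
  have hL := W2sq_le_integral hγ (hγ.integrable_cost hΩc.isBounded hρ hν)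
  set L := ∫ p, ‖p.1 - p.2‖ ^ 2 ∂γ
  have hstep : t * (c * W2sq ρ σ + 𝓔 ρ + (1 - t) * (c + lam / 2) * L)
      ≤ t * (c * W2sq ν σ + 𝓔 ν + c * t) := by
    nlinarith [mul_le_mul_of_nonneg_left hWγ hc]
  have hpos : 0 ≤ (1 - t) * (c + lam / 2) := mul_nonneg (by linarith [ht.2]) (by positivity)
  nlinarith [le_of_mul_le_mul_left hstep ht.1, mul_le_mul_of_nonneg_left hL hpos]

theorem add_mul_W2sq_le_of_isMinOn (hΩc : IsCompact Ω) (hΩconv : Convex ℝ Ω) {α β : ℝ}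
    (hβ : 0 ≤ β) (hβα : β ≤ α) {ρ ρ₁ ρ₂ ν : Measure (Rd d)} (hρ : ProbOn Ω ρ)
    (h₁ : ProbOn Ω ρ₁) (h₂ : ProbOn Ω ρ₂) (hν : ProbOn Ω ν)
    (hmin : IsMinOn (fun μ => α * W2sq μ ρ₁ - β * W2sq μ ρ₂) {μ | ProbOn Ω μ} ρ) :
    α * W2sq ρ ρ₁ - β * W2sq ρ ρ₂ + (α - β) * W2sq ρ ν ≤ α * W2sq ν ρ₁ - β * W2sq ν ρ₂ := by
  refine le_of_forall_mem_Ioo_le_add_mul (C := α + (α - β) * W2sq ρ ν) fun t ht => ?_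
  have ht' : t ∈ Icc (0 : ℝ) 1 := Ioo_subset_Icc_self ht
  obtain ⟨γ, hγ, hW₁⟩ := exists_isCoupling_W2sq_interpolant_le hΩc hΩconv h₁ hρ hν ht'
    (mul_pos ht.1 ht.1)
  have hW₂ := le_W2sq_interpolant hΩc hΩconv h₂ hρ hν hγ ht'
  have hωP := ProbOn.interpolant hΩc.isClosed.measurableSet hΩconv hρ hν hγ ht'
  have hminω : α * W2sq ρ ρ₁ - β * W2sq ρ ρ₂
      ≤ α * W2sq (interpolant t γ) ρ₁ - β * W2sq (interpolant t γ) ρ₂ :=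
    isMinOn_iff.1 hmin _ hωP
  have hL := W2sq_le_integral hγ (hγ.integrable_cost hΩc.isBounded hρ hν)
  set L := ∫ p, ‖p.1 - p.2‖ ^ 2 ∂γ
  have hstep : t * (α * W2sq ρ ρ₁ - β * W2sq ρ ρ₂ + (α - β) * (1 - t) * L)
      ≤ t * (α * W2sq ν ρ₁ - β * W2sq ν ρ₂ + α * t) := by
    nlinarith [mul_le_mul_of_nonneg_left hW₁ (hβ.trans hβα), mul_le_mul_of_nonneg_left hW₂ hβ]
  have hpos : 0 ≤ (α - β) * (1 - t) := mul_nonneg (by linarith) (by linarith [ht.2])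
  nlinarith [le_of_mul_le_mul_left hstep ht.1, mul_le_mul_of_nonneg_left hL hpos]

end Wasserstein

theorem stmt_16_general {d : ℕ} (Ω : Set (Rd d)) (hΩc : IsCompact Ω) (hΩconv : Convex ℝ Ω)
    (𝓔 : Measure (Rd d) → ℝ)
    (lam : ℝ) (hlam : 0 ≤ lam) (hgg : LambdaConvexGG Ω 𝓔 lam)
    (α β τ : ℝ) (hα : 1 < α) (hβ : β = α - 1) (hβ1 : β < 1) (hτ : 0 < τ)
    (ρm2 ρm1 ρa ρn : Measure (Rd d))
    (hm2 : ProbOn Ω ρm2) (hm1 : ProbOn Ω ρm1) (haP : ProbOn Ω ρa) (hnP : ProbOn Ω ρn)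
    (hext : ∀ ρ, ProbOn Ω ρ →
      α * W2sq ρa ρm1 - β * W2sq ρa ρm2 ≤ α * W2sq ρ ρm1 - β * W2sq ρ ρm2)
    (hmin : ∀ ρ, ProbOn Ω ρ →
      W2sq ρn ρa / (2*(1-β)*τ) + 𝓔 ρn ≤ W2sq ρ ρa / (2*(1-β)*τ) + 𝓔 ρ)
    (ν : Measure (Rd d)) (hν : ProbOn Ω ν) :
    (1/(2*(1-β)*τ) + lam/2) * W2sq ρn ν
        - α * W2sq ν ρm1 / (2*(1-β)*τ) + β * W2sq ν ρm2 / (2*(1-β)*τ)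
      ≤ 𝓔 ν - 𝓔 ρn + α*β * W2sq ρm1 ρm2 / (2*(1-β)*τ)
        - W2sq ρn ρa / (2*(1-β)*τ) := by
  have hβ0 : 0 ≤ β := by linarith
  set c := 1 / (2 * (1 - β) * τ) with hc_def
  have hc : 0 ≤ c := by have := sub_pos.2 hβ1; positivity
  have hdiv : ∀ x, x / (2 * (1 - β) * τ) = c * x := fun x => by rw [hc_def, one_div_mul_eq_div]
  have hevi := discrete_evi_of_isMinOn hΩc hΩconv hgg hlam hc haP hnP hν
    (isMinOn_iff.2 fun μ hμ => by simpa only [hdiv] using hmin μ hμ)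
  have hextra := add_mul_W2sq_le_of_isMinOn hΩc hΩconv hβ0 (by linarith) haP hm1 hm2 hν
    (isMinOn_iff.2 hext)
  have htri := mul_W2sq_le_add hΩc.isBounded hβ0 haP hm1 hm2
  rw [show α - β = 1 by linarith, W2sq_comm ρa ν] at hextra
  rw [show 1 + β = α by linarith] at htri
  have hνa : W2sq ν ρa ≤ α * W2sq ν ρm1 - β * W2sq ν ρm2 + α * β * W2sq ρm1 ρm2 := by
    linarith
  simp only [hdiv]
  nlinarith [mul_le_mul_of_nonneg_left hνa hc]

/-- Lemma 5.1: discrete EVI inequality for one step of the EVBDF2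
scheme with metric extrapolation. -/
theorem stmt_16 {d : ℕ} (Ω : Set (Rd d)) (hΩc : IsCompact Ω) (hΩconv : Convex ℝ Ω)
    (𝓔 : Measure (Rd d) → ℝ)
    (hlsc : LowerSemicontinuous fun p : ProbabilityMeasure (Rd d) => 𝓔 (p : Measure (Rd d)))
    (lam : ℝ) (hlam : 0 ≤ lam) (hgg : LambdaConvexGG Ω 𝓔 lam)
    (α β τ : ℝ) (hα : 1 < α) (hβ : β = α - 1) (hβ1 : β < 1) (hτ : 0 < τ)
    (ρm2 ρm1 ρa ρn : Measure (Rd d))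
    (hm2 : ProbOn Ω ρm2) (hm1 : ProbOn Ω ρm1) (haP : ProbOn Ω ρa) (hnP : ProbOn Ω ρn)
    (hext : ∀ ρ, ProbOn Ω ρ →
      α * W2sq ρa ρm1 - β * W2sq ρa ρm2 ≤ α * W2sq ρ ρm1 - β * W2sq ρ ρm2)
    (hmin : ∀ ρ, ProbOn Ω ρ →
      W2sq ρn ρa / (2*(1-β)*τ) + 𝓔 ρn ≤ W2sq ρ ρa / (2*(1-β)*τ) + 𝓔 ρ)
    (ν : Measure (Rd d)) (hν : ProbOn Ω ν) :
    (1/(2*(1-β)*τ) + lam/2) * W2sq ρn ν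
        - α * W2sq ν ρm1 / (2*(1-β)*τ) + β * W2sq ν ρm2 / (2*(1-β)*τ)
      ≤ 𝓔 ν - 𝓔 ρn + α*β * W2sq ρm1 ρm2 / (2*(1-β)*τ)
        - W2sq ρn ρa / (2*(1-β)*τ) :=
  stmt_16_general Ω hΩc hΩconv 𝓔 lam hlam hgg α β τ hα hβ hβ1 hτ ρm2 ρm1 ρa ρn hm2 hm1 haP hnP hext
    hmin ν hν
end
end
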